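/- Let n ≥ 2 be an integer, z ∈ ℂⁿ with z ≠ 0, and λ ∈ ℝ with λ < −1. Then there exists ξ ∈ ℂⁿ, ξ ≠ 0, such that Σ_{k,j,i,q=1}^n R_{kj̄iq̄}(z,λ)·ξ^k·conj(ξ^j)·ξ^i·conj(ξ^q) is a negative real number (indeed any nonzero ξ with Σ_m conj(z^m)ξ^m = 0 works, and for such ξ the quantity equals (λ+1)·(|z|²|ξ|²)²/|z|⁸ < 0). In particular, the holomorphic sectional curvature, and hence the holomorphic bisectional curvature, of ω_λ is not non-negative. -/
import Mathlib


open Finset ComplexConjugate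

/-- `|z|² = Σₘ |zᵐ|²` for `z ∈ ℂⁿ`. -/
noncomputable def zsq {n : ℕ} (z : Fin n → ℂ) : ℝ := ∑ m, Complex.normSq (z m)

/-- The Chern curvature tensor `R_{kj̄iq̄}(z,λ)` of the Hermitian metric `ω_λ`
(Lemma 2.1 of the paper). -/
noncomputable def Rten {n : ℕ} (z : Fin n → ℂ) (lam : ℝ) (k j i q : Fin n) : ℂ :=
  (if i = q then 1 else 0)
      * ((if j = k then ((zsq z : ℝ) : ℂ) else 0) - conj (z k) * z j) / ((zsq z : ℝ) : ℂ) ^ 3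
    + (lam : ℂ) * ((if i = j then ((zsq z : ℝ) : ℂ) else 0) - conj (z i) * z j)
        * ((if k = q then ((zsq z : ℝ) : ℂ) else 0) - conj (z k) * z q) / ((zsq z : ℝ) : ℂ) ^ 4
    + ((lam ^ 2 - 2 * lam : ℝ) : ℂ) * conj (z i) * z q
        * ((if k = j then ((zsq z : ℝ) : ℂ) else 0) - conj (z k) * z j) / ((zsq z : ℝ) : ℂ) ^ 4

/-- Lemma 2.4: For `n ≥ 2`, `z ≠ 0` and `λ < −1`, there exists `ξ ≠ 0`
with `Σ R_{kj̄iq̄}(z,λ) ξᵏ ξ̄ʲ ξⁱ ξ̄ᑫ` a negative real number; indeed any nonzero `ξ` with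
`⟨z̄,ξ⟩ = 0` works, and for such `ξ` the quantity equals `(λ+1)(|z|²|ξ|²)²/|z|⁸ < 0`.
In particular the holomorphic sectional (hence bisectional) curvature of `ω_λ` is not
non-negative. -/
theorem sectional_negative (n : ℕ) (hn : 2 ≤ n) (z : Fin n → ℂ) (hz : z ≠ 0)
    (lam : ℝ) (hlam : lam < -1) :
    (∀ ξ : Fin n → ℂ, ξ ≠ 0 → (∑ m, conj (z m) * ξ m) = 0 →
        ∑ k, ∑ j, ∑ i, ∑ q, Rten z lam k j i q * ξ k * conj (ξ j) * ξ i * conj (ξ q)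
          = (((lam + 1) * (zsq z * ∑ m, Complex.normSq (ξ m)) ^ 2 / (zsq z) ^ 4 : ℝ) : ℂ)
        ∧ (lam + 1) * (zsq z * ∑ m, Complex.normSq (ξ m)) ^ 2 / (zsq z) ^ 4 < 0)
    ∧ ∃ ξ : Fin n → ℂ, ξ ≠ 0 ∧ ∃ r : ℝ, r < 0 ∧
        ∑ k, ∑ j, ∑ i, ∑ q, Rten z lam k j i q * ξ k * conj (ξ j) * ξ i * conj (ξ q)
          = (r : ℂ) := by
  have sum_normSq_pos : ∀ w : Fin n → ℂ, w ≠ 0 → 0 < ∑ m, Complex.normSq (w m) := by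
    intro w hw
    obtain ⟨m, hm⟩ := Function.ne_iff.mp hw
    exact Finset.sum_pos' (fun i _ => Complex.normSq_nonneg _)
      ⟨m, Finset.mem_univ m, Complex.normSq_pos.mpr hm⟩
  have hzpos : 0 < zsq z := sum_normSq_pos z hz
  have hS : ((zsq z : ℝ) : ℂ) ≠ 0 := Complex.ofReal_ne_zero.mpr (ne_of_gt hzpos)
  have key : ∀ ξ : Fin n → ℂ, ξ ≠ 0 → (∑ m, conj (z m) * ξ m) = 0 →
      (∑ k, ∑ j, ∑ i, ∑ q, Rten z lam k j i q * ξ k * conj (ξ j) * ξ i * conj (ξ q)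
          = (((lam + 1) * (zsq z * ∑ m, Complex.normSq (ξ m)) ^ 2 / (zsq z) ^ 4 : ℝ) : ℂ))
        ∧ (lam + 1) * (zsq z * ∑ m, Complex.normSq (ξ m)) ^ 2 / (zsq z) ^ 4 < 0 := by
    intro ξ hξ hperp
    have hApos : 0 < ∑ m, Complex.normSq (ξ m) := sum_normSq_pos ξ hξ
    have hQ : ∑ m, z m * conj (ξ m) = 0 := by
      have := congrArg (starRingEnd ℂ) hperp
      simpa [map_sum, mul_comm] using this
    have hA : ∑ m, ξ m * conj (ξ m) = ((∑ m, Complex.normSq (ξ m) : ℝ) : ℂ) := by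
      push_cast
      exact Finset.sum_congr rfl fun m _ => (Complex.mul_conj (ξ m))
    have hdelta : ∀ i : Fin n, ∑ q, (if i = q then (1:ℂ) else 0) * conj (ξ q) = conj (ξ i) := by
      intro i; simp
    have Lq : ∀ k : Fin n, ∑ q, (((if k = q then ((zsq z : ℝ) : ℂ) else 0) - conj (z k) * z q)
        * conj (ξ q)) = ((zsq z : ℝ) : ℂ) * conj (ξ k) := by
      intro k
      have h1 : ∑ q, conj (z k) * z q * conj (ξ q) = conj (z k) * ∑ q, z q * conj (ξ q) := by
        rw [Finset.mul_sum]; exact Finset.sum_congr rfl fun q _ => by ring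
      simp only [sub_mul, Finset.sum_sub_distrib, ite_mul, zero_mul, Finset.sum_ite_eq,
        Finset.mem_univ, if_true, h1, hQ, mul_zero, sub_zero]
    have Lj : ∀ k : Fin n, ∑ j, (((if j = k then ((zsq z : ℝ) : ℂ) else 0) - conj (z k) * z j)
        * conj (ξ j)) = ((zsq z : ℝ) : ℂ) * conj (ξ k) := by
      intro k
      have h1 : ∑ j, conj (z k) * z j * conj (ξ j) = conj (z k) * ∑ j, z j * conj (ξ j) := by
        rw [Finset.mul_sum]; exact Finset.sum_congr rfl fun q _ => by ring
      simp only [sub_mul, Finset.sum_sub_distrib, ite_mul, zero_mul, Finset.sum_ite_eq',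
        Finset.mem_univ, if_true, h1, hQ, mul_zero, sub_zero]
    have Li : ∀ j : Fin n, ∑ i, (((if i = j then ((zsq z : ℝ) : ℂ) else 0) - conj (z i) * z j)
        * ξ i) = ((zsq z : ℝ) : ℂ) * ξ j := by
      intro j
      have h1 : ∑ i, conj (z i) * z j * ξ i = z j * ∑ i, conj (z i) * ξ i := by
        rw [Finset.mul_sum]; exact Finset.sum_congr rfl fun q _ => by ring
      simp only [sub_mul, Finset.sum_sub_distrib, ite_mul, zero_mul, Finset.sum_ite_eq',
        Finset.mem_univ, if_true, h1, hperp, mul_zero, sub_zero]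
    constructor
    · calc
        ∑ k, ∑ j, ∑ i, ∑ q, Rten z lam k j i q * ξ k * conj (ξ j) * ξ i * conj (ξ q)
            = ∑ k, ∑ j, ∑ i,
              (((if j = k then ((zsq z : ℝ) : ℂ) else 0) - conj (z k) * z j) * ξ k * conj (ξ j)
                  * (ξ i * conj (ξ i)) / ((zsq z : ℝ) : ℂ) ^ 3
                + (lam : ℂ)
                  * (((if i = j then ((zsq z : ℝ) : ℂ) else 0) - conj (z i) * z j) * ξ i)
                  * conj (ξ j) * (ξ k * (((zsq z : ℝ) : ℂ) * conj (ξ k)))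
                  / ((zsq z : ℝ) : ℂ) ^ 4) := by
          refine Finset.sum_congr rfl fun k _ => Finset.sum_congr rfl fun j _ =>
            Finset.sum_congr rfl fun i _ => ?_
          have e : ∀ q, Rten z lam k j i q * ξ k * conj (ξ j) * ξ i * conj (ξ q)
              = (ξ k * conj (ξ j) * ξ i / ((zsq z : ℝ) : ℂ) ^ 3
                  * ((if j = k then ((zsq z : ℝ) : ℂ) else 0) - conj (z k) * z j))
                  * ((if i = q then (1:ℂ) else 0) * conj (ξ q))
                + ((lam : ℂ) * ((if i = j then ((zsq z : ℝ) : ℂ) else 0) - conj (z i) * z j)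
                  / ((zsq z : ℝ) : ℂ) ^ 4 * (conj (ξ j) * ξ i) * ξ k)
                  * (((if k = q then ((zsq z : ℝ) : ℂ) else 0) - conj (z k) * z q) * conj (ξ q))
                + (((lam ^ 2 - 2 * lam : ℝ) : ℂ) * conj (z i)
                  * ((if k = j then ((zsq z : ℝ) : ℂ) else 0) - conj (z k) * z j)
                  / ((zsq z : ℝ) : ℂ) ^ 4 * (ξ k * conj (ξ j) * ξ i)) * (z q * conj (ξ q)) := by
            intro q; unfold Rten; ring
          rw [Finset.sum_congr rfl fun q _ => e q]
          simp only [Finset.sum_add_distrib, ← Finset.mul_sum]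
          rw [hdelta i, Lq k, hQ]
          ring
        _ = ∑ k, ∑ j,
              (((if j = k then ((zsq z : ℝ) : ℂ) else 0) - conj (z k) * z j) * ξ k * conj (ξ j)
                  * ((∑ m, Complex.normSq (ξ m) : ℝ) : ℂ) / ((zsq z : ℝ) : ℂ) ^ 3
                + (lam : ℂ) * (((zsq z : ℝ) : ℂ) * ξ j)
                  * conj (ξ j) * (ξ k * (((zsq z : ℝ) : ℂ) * conj (ξ k)))
                  / ((zsq z : ℝ) : ℂ) ^ 4) := by
          refine Finset.sum_congr rfl fun k _ => Finset.sum_congr rfl fun j _ => ?_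
          have e : ∀ i : Fin n,
              (((if j = k then ((zsq z : ℝ) : ℂ) else 0) - conj (z k) * z j) * ξ k * conj (ξ j)
                  * (ξ i * conj (ξ i)) / ((zsq z : ℝ) : ℂ) ^ 3
                + (lam : ℂ)
                  * (((if i = j then ((zsq z : ℝ) : ℂ) else 0) - conj (z i) * z j) * ξ i)
                  * conj (ξ j) * (ξ k * (((zsq z : ℝ) : ℂ) * conj (ξ k)))
                  / ((zsq z : ℝ) : ℂ) ^ 4)
              = (((if j = k then ((zsq z : ℝ) : ℂ) else 0) - conj (z k) * z j) * ξ k * conj (ξ j)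
                  / ((zsq z : ℝ) : ℂ) ^ 3) * (ξ i * conj (ξ i))
                + ((lam : ℂ) * conj (ξ j) * (ξ k * (((zsq z : ℝ) : ℂ) * conj (ξ k)))
                  / ((zsq z : ℝ) : ℂ) ^ 4)
                  * (((if i = j then ((zsq z : ℝ) : ℂ) else 0) - conj (z i) * z j) * ξ i) := by
            intro i; ring
          rw [Finset.sum_congr rfl fun i _ => e i]
          simp only [Finset.sum_add_distrib, ← Finset.mul_sum]
          rw [hA, Li j]
          ring
        _ = ∑ k, ((((zsq z : ℝ) : ℂ) * ((∑ m, Complex.normSq (ξ m) : ℝ) : ℂ)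
                / ((zsq z : ℝ) : ℂ) ^ 3
              + (lam : ℂ) * ((zsq z : ℝ) : ℂ) ^ 2 * ((∑ m, Complex.normSq (ξ m) : ℝ) : ℂ)
                / ((zsq z : ℝ) : ℂ) ^ 4) * (ξ k * conj (ξ k))) := by
          refine Finset.sum_congr rfl fun k _ => ?_
          have e : ∀ j : Fin n,
              (((if j = k then ((zsq z : ℝ) : ℂ) else 0) - conj (z k) * z j) * ξ k * conj (ξ j)
                  * ((∑ m, Complex.normSq (ξ m) : ℝ) : ℂ) / ((zsq z : ℝ) : ℂ) ^ 3
                + (lam : ℂ) * (((zsq z : ℝ) : ℂ) * ξ j)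
                  * conj (ξ j) * (ξ k * (((zsq z : ℝ) : ℂ) * conj (ξ k)))
                  / ((zsq z : ℝ) : ℂ) ^ 4)
              = (ξ k * ((∑ m, Complex.normSq (ξ m) : ℝ) : ℂ) / ((zsq z : ℝ) : ℂ) ^ 3)
                  * (((if j = k then ((zsq z : ℝ) : ℂ) else 0) - conj (z k) * z j) * conj (ξ j))
                + ((lam : ℂ) * ((zsq z : ℝ) : ℂ) * (ξ k * (((zsq z : ℝ) : ℂ) * conj (ξ k)))
                  / ((zsq z : ℝ) : ℂ) ^ 4) * (ξ j * conj (ξ j)) := by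
            intro j; ring
          rw [Finset.sum_congr rfl fun j _ => e j]
          simp only [Finset.sum_add_distrib, ← Finset.mul_sum]
          rw [hA, Lj k]
          ring
        _ = (((lam + 1) * (zsq z * ∑ m, Complex.normSq (ξ m)) ^ 2 / (zsq z) ^ 4 : ℝ) : ℂ) := by
          rw [← Finset.mul_sum, hA]
          push_cast
          field_simp
          ring
    · have h1 : lam + 1 < 0 := by linarith
      have h2 : (0:ℝ) < (zsq z * ∑ m, Complex.normSq (ξ m)) ^ 2 :=
        pow_pos (mul_pos hzpos hApos) 2
      have h3 : (0:ℝ) < (zsq z) ^ 4 := pow_pos hzpos 4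
      exact div_neg_of_neg_of_pos (mul_neg_of_neg_of_pos h1 h2) h3
  refine ⟨key, ?_⟩
  obtain ⟨a, ha⟩ := Function.ne_iff.mp hz
  haveI : Nontrivial (Fin n) := Fin.nontrivial_iff_two_le.mpr hn
  obtain ⟨b, hb⟩ := exists_ne a
  set ξ : Fin n → ℂ := fun m => if m = a then conj (z b) else if m = b then -conj (z a) else 0
    with hξdef
  have hξ0 : ξ ≠ 0 := by
    intro h
    have h2 : -conj (z a) = (0:ℂ) := by simpa [hξdef, hb] using congrFun h b
    exact ha (by simpa using h2)
  have hperp : ∑ m, conj (z m) * ξ m = 0 := by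
    have e : ∀ m, conj (z m) * ξ m
        = (if m = a then conj (z a) * conj (z b) else 0)
          + (if m = b then conj (z b) * (-conj (z a)) else 0) := by
      intro m
      by_cases h1 : m = a
      · subst h1; simp [hξdef, Ne.symm hb]
      · by_cases h2 : m = b
        · subst h2; simp [hξdef, h1]
        · simp [hξdef, h1, h2]
    rw [Finset.sum_congr rfl fun m _ => e m, Finset.sum_add_distrib]
    simp only [Finset.sum_ite_eq', Finset.mem_univ, if_true]
    ring
  obtain ⟨heq, hneg⟩ := key ξ hξ0 hperp
  exact ⟨ξ, hξ0, _, hneg, heq⟩
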